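/- Let P(λ) = λ²M + λC + K with bounded ε-pseudospectrum Λ_ε(P) = { z : σ_min(P(z)) ≤ ε p_w(|z|) }, and let V be a subspace of ℂⁿ. If V contains a right singular vector v corresponding to σ_min(P(z̄)) for some rightmost point z̄ ∈ Λ_ε(P) (i.e., Re(z̄) = α_ε(P)), then α_ε^V(P) = α_ε(P). -/

import Mathlib

open Matrix Complex

/-- Euclidean norm of a complex vector. -/
noncomputable def vnorm {ι : Type*} [Fintype ι] (v : ι → ℂ) : ℝ :=
  Real.sqrt (∑ i, ‖v i‖ ^ 2)

/-- Smallest singular value of a (possibly rectangular) complex matrix: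
the infimum of `‖A v‖` over unit vectors `v`. -/
noncomputable def sigmaMin {ι κ : Type*} [Fintype ι] [Fintype κ]
    (A : Matrix ι κ ℂ) : ℝ :=
  sInf {t : ℝ | ∃ v : κ → ℂ, vnorm v = 1 ∧ t = vnorm (A.mulVec v)}

/-- Spectral (operator 2-) norm of a complex matrix. -/
noncomputable def specNorm {ι κ : Type*} [Fintype ι] [Fintype κ]
    (A : Matrix ι κ ℂ) : ℝ :=
  sSup {t : ℝ | ∃ v : κ → ℂ, vnorm v = 1 ∧ t = vnorm (A.mulVec v)}

/-- The weight/scaling function `p_w(z) = √(w_m² z⁴ + w_c² z² + w_k²)`. -/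
noncomputable def pw (wm wc wk z : ℝ) : ℝ :=
  Real.sqrt (wm ^ 2 * z ^ 4 + wc ^ 2 * z ^ 2 + wk ^ 2)

/-- The quadratic matrix polynomial `P(z) = z² M + z C + K`. -/
noncomputable def Ppoly {n : ℕ} (M C K : Matrix (Fin n) (Fin n) ℂ) (z : ℂ) :
    Matrix (Fin n) (Fin n) ℂ :=
  z ^ 2 • M + z • C + K

/-- The column span (range) of a matrix, viewed as a subspace of `ℂⁿ`. -/
noncomputable def colSpan {n r : ℕ} (A : Matrix (Fin n) (Fin r) ℂ) : Submodule ℂ (Fin n → ℂ) :=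
  Submodule.span ℂ (Set.range fun j => fun i => A i j)

/-- The ε-pseudospectrum of the quadratic matrix polynomial `P(λ)=λ²M+λC+K`
(singular value characterization). -/
noncomputable def Lam {n : ℕ} (M C K : Matrix (Fin n) (Fin n) ℂ)
    (ε wm wc wk : ℝ) : Set ℂ :=
  {z : ℂ | sigmaMin (Ppoly M C K z) ≤ ε * pw wm wc wk ‖z‖}

/-- The restricted ε-pseudospectrum determined by the basis matrix `Vm`. -/
noncomputable def LamRes {n r : ℕ} (M C K : Matrix (Fin n) (Fin n) ℂ)
    (Vm : Matrix (Fin n) (Fin r) ℂ) (ε wm wc wk : ℝ) : Set ℂ :=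
  {z : ℂ | sigmaMin (Ppoly M C K z * Vm) ≤ ε * pw wm wc wk ‖z‖}

/-!
Orthonormal columns make `u ↦ V u` an isometry, so for every `z` the unit vectors `V u` are among
the competitors for `σ_min(P(z))`; hence `σ_min(P(z)) ≤ σ_min(P(z) V)` and the restricted
pseudospectrum lies inside `Λ_ε(P)`. Conversely, at the rightmost point `z̄` the right singular
vector `v = V c` gives `σ_min(P(z̄) V) ≤ ‖P(z̄) v‖ = σ_min(P(z̄))`, so `z̄` is also a point of the
restricted pseudospectrum, and it is then rightmost there as well.
-/

section SingularValues

variable {ι κ μ : Type*} [Fintype ι] [Fintype κ] [Fintype μ]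

lemma vnorm_nonneg (v : κ → ℂ) : 0 ≤ vnorm v :=
  Real.sqrt_nonneg _

lemma star_dotProduct_self_eq_sum_norm_sq (x : κ → ℂ) :
    star x ⬝ᵥ x = ((∑ i, ‖x i‖ ^ 2 : ℝ) : ℂ) := by
  simp only [dotProduct, Pi.star_apply]
  push_cast
  refine Finset.sum_congr rfl fun i _ => ?_
  rw [RCLike.star_def, mul_comm, RCLike.mul_conj]
  rfl

lemma vnorm_mulVec_of_conjTranspose_mul_self [DecidableEq κ] {V : Matrix ι κ ℂ}
    (hV : Vᴴ * V = 1) (u : κ → ℂ) : vnorm (V *ᵥ u) = vnorm u := by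
  have key : star (V *ᵥ u) ⬝ᵥ V *ᵥ u = star u ⬝ᵥ u := by
    rw [Matrix.star_mulVec, Matrix.dotProduct_mulVec, Matrix.vecMul_vecMul, hV,
      Matrix.vecMul_one]
  rw [star_dotProduct_self_eq_sum_norm_sq, star_dotProduct_self_eq_sum_norm_sq] at key
  unfold vnorm
  exact_mod_cast congrArg Real.sqrt (Complex.ofReal_injective key)

lemma vnorm_pi_single_one [DecidableEq κ] (j : κ) : vnorm (Pi.single j (1 : ℂ)) = 1 := by
  rw [vnorm, Finset.sum_eq_single j (fun i _ hi => by simp [hi]) (by simp)]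
  simp

lemma nonempty_of_vnorm_eq_one {c : κ → ℂ} (hc : vnorm c = 1) : Nonempty κ := by
  by_contra hκ
  rw [not_nonempty_iff] at hκ
  simp [vnorm] at hc

lemma sigmaMin_le_vnorm_mulVec (A : Matrix ι κ ℂ) {v : κ → ℂ} (hv : vnorm v = 1) :
    sigmaMin A ≤ vnorm (A *ᵥ v) :=
  csInf_le ⟨0, fun _ ⟨_, _, ht⟩ => ht ▸ vnorm_nonneg _⟩ ⟨v, hv, rfl⟩

lemma sigmaMin_le_sigmaMin_mul [DecidableEq μ] [Nonempty μ] (A : Matrix ι κ ℂ)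
    {V : Matrix κ μ ℂ} (hV : Vᴴ * V = 1) : sigmaMin A ≤ sigmaMin (A * V) := by
  obtain ⟨j⟩ := ‹Nonempty μ›
  refine le_csInf ⟨_, _, vnorm_pi_single_one j, rfl⟩ ?_
  rintro _ ⟨u, hu, rfl⟩
  rw [← Matrix.mulVec_mulVec]
  exact sigmaMin_le_vnorm_mulVec A (by rw [vnorm_mulVec_of_conjTranspose_mul_self hV, hu])

end SingularValues

lemma exists_mulVec_eq_of_mem_colSpan {n r : ℕ} {V : Matrix (Fin n) (Fin r) ℂ} {v : Fin n → ℂ}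
    (hv : v ∈ colSpan V) : ∃ c : Fin r → ℂ, V *ᵥ c = v := by
  have hv' : v ∈ LinearMap.range V.mulVecLin := by
    rw [Matrix.range_mulVecLin]
    exact hv
  exact hv'

section Pseudospectra

variable {n r : ℕ} (M C K : Matrix (Fin n) (Fin n) ℂ) (ε wm wc wk : ℝ)
  {Vm : Matrix (Fin n) (Fin r) ℂ}

lemma LamRes_subset_Lam [Nonempty (Fin r)] (hVm : Vmᴴ * Vm = 1) :
    LamRes M C K Vm ε wm wc wk ⊆ Lam M C K ε wm wc wk :=
  fun _ hz => (sigmaMin_le_sigmaMin_mul _ hVm).trans hz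

lemma mem_LamRes_of_singular_vector_mem_colSpan (hVm : Vmᴴ * Vm = 1) {z : ℂ}
    (hz : z ∈ Lam M C K ε wm wc wk) {v : Fin n → ℂ} (hvMem : v ∈ colSpan Vm)
    (hvUnit : vnorm v = 1) (hvSing : vnorm (Ppoly M C K z *ᵥ v) = sigmaMin (Ppoly M C K z)) :
    z ∈ LamRes M C K Vm ε wm wc wk := by
  obtain ⟨c, rfl⟩ := exists_mulVec_eq_of_mem_colSpan hvMem
  have hc : vnorm c = 1 := by rwa [← vnorm_mulVec_of_conjTranspose_mul_self hVm]
  have : sigmaMin (Ppoly M C K z * Vm) ≤ sigmaMin (Ppoly M C K z) := by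
    rw [← hvSing, Matrix.mulVec_mulVec]
    exact sigmaMin_le_vnorm_mulVec _ hc
  exact this.trans hz

end Pseudospectra

lemma bddAbove_re_image_of_isBounded {S : Set ℂ} (hS : Bornology.IsBounded S) :
    BddAbove (re '' S) :=
  (reCLM.lipschitz.isBounded_image hS).bddAbove

lemma csSup_image_eq_of_subset_of_mem {α : Type*} {f : α → ℝ} {S T : Set α} (hTS : T ⊆ S)
    (hS : BddAbove (f '' S)) {z : α} (hzT : z ∈ T) (hz : f z = sSup (f '' S)) :
    sSup (f '' T) = sSup (f '' S) := by
  rw [← hz]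
  refine IsGreatest.csSup_eq ⟨⟨z, hzT, rfl⟩, ?_⟩
  rintro _ ⟨y, hy, rfl⟩
  exact hz ▸ le_csSup hS ⟨y, hTS hy, rfl⟩

theorem low_dimensionality_general
    {n r : ℕ}
    (M C K : Matrix (Fin n) (Fin n) ℂ)
    (ε wm wc wk : ℝ)
    (Vm : Matrix (Fin n) (Fin r) ℂ) (hVm : Vmᴴ * Vm = 1)
    (hbd : Bornology.IsBounded (Lam M C K ε wm wc wk))
    (zb : ℂ) (hzb : zb ∈ Lam M C K ε wm wc wk)
    (hzbRight : zb.re = sSup (Complex.re '' Lam M C K ε wm wc wk))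
    (v : Fin n → ℂ) (hvMem : v ∈ colSpan Vm) (hvUnit : vnorm v = 1)
    (hvSing : vnorm ((Ppoly M C K zb).mulVec v) = sigmaMin (Ppoly M C K zb)) :
    sSup (Complex.re '' LamRes M C K Vm ε wm wc wk) =
      sSup (Complex.re '' Lam M C K ε wm wc wk) := by
  obtain ⟨c, hc⟩ := exists_mulVec_eq_of_mem_colSpan hvMem
  -- without columns `sigmaMin (P z * Vm) = sInf ∅ = 0`, and every `z` would lie in `LamRes`
  have : Nonempty (Fin r) :=
    nonempty_of_vnorm_eq_one (c := c) (by rwa [← vnorm_mulVec_of_conjTranspose_mul_self hVm, hc])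
  exact csSup_image_eq_of_subset_of_mem (LamRes_subset_Lam M C K ε wm wc wk hVm)
    (bddAbove_re_image_of_isBounded hbd)
    (mem_LamRes_of_singular_vector_mem_colSpan M C K ε wm wc wk hVm hzb hvMem hvUnit hvSing)
    hzbRight

/-- Low dimensionality: if the subspace spanned by the orthonormal columns
of `Vm` contains a right singular vector corresponding to `σ_min(P(z̄))` at a rightmost
point `z̄` of the bounded pseudospectrum `Λ_ε(P)`, then `α_ε^V(P) = α_ε(P)`. -/
theorem low_dimensionality
    {n r : ℕ} (hr : 0 < r)
    (M C K : Matrix (Fin n) (Fin n) ℂ)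
    (ε wm wc wk : ℝ) (hε : 0 < ε) (hwm : 0 ≤ wm) (hwc : 0 ≤ wc) (hwk : 0 ≤ wk)
    (Vm : Matrix (Fin n) (Fin r) ℂ) (hVm : Vmᴴ * Vm = 1)
    (hbd : Bornology.IsBounded (Lam M C K ε wm wc wk))
    (zb : ℂ) (hzb : zb ∈ Lam M C K ε wm wc wk)
    (hzbRight : zb.re = sSup (Complex.re '' Lam M C K ε wm wc wk))
    (v : Fin n → ℂ) (hvMem : v ∈ colSpan Vm) (hvUnit : vnorm v = 1)
    (hvSing : vnorm ((Ppoly M C K zb).mulVec v) = sigmaMin (Ppoly M C K zb)) :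
    sSup (Complex.re '' LamRes M C K Vm ε wm wc wk) =
      sSup (Complex.re '' Lam M C K ε wm wc wk) :=
  low_dimensionality_general M C K ε wm wc wk Vm hVm hbd zb hzb hzbRight v hvMem hvUnit hvSing
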